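/- arXiv:1203.6422 — 2 statements merged into one kernel-verified Lean document; each statement's English description precedes it below -/
import Mathlib

section
/- Let φ* be the 4×4 matrix [[-1,0,0,0],[0,-1,0,0],[0,0,-1,0],[0,0,1,-1]] acting on ℝ⁴ (representing the action on H¹(T⁴)). Then the induced map Λ²φ* on Λ²(ℝ⁴) ≅ ℝ⁶ has eigenvalue 1, and ker(Λ²φ* − id) ∩ im(Λ²φ* − id) ≠ {0}; in particular (X−1)² divides the minimal polynomial of Λ²φ*. -/
/-!
On `e₀ ∧ e₂` and `e₀ ∧ e₃` (indices from `0`) the map `Λ²φ*` acts as a unipotent Jordan block: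
it fixes `e₀ ∧ e₃` and sends `e₀ ∧ e₂` to `e₀ ∧ e₂ - e₀ ∧ e₃`. Hence `e₀ ∧ e₃`, which is nonzero
because `e₀, e₃` are linearly independent, lies in `ker (Λ²φ* - 1) ∩ im (Λ²φ* - 1)`.

For any endomorphism `f` and any nonzero `v = (f - μ) u` with `f v = μ v`, the scalar `μ` is a
root of `p = minpoly f`; writing `p = (X - μ) q` and applying `p(f)` to `u` gives
`0 = q(f) v = q(μ) v`, so `μ` is a root of `q` as well.
-/

open Polynomial ExteriorAlgebra

/-- The linear map on `ℝ⁴` given by the matrix `[[-1,0,0,0],[0,-1,0,0],[0,0,-1,0],[0,0,1,-1]]`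
(columns: `e¹ ↦ −e¹`, `e² ↦ −e²`, `e³ ↦ −e³ + e⁴`, `e⁴ ↦ −e⁴`). -/
def phiStar : (Fin 4 → ℝ) →ₗ[ℝ] (Fin 4 → ℝ) :=
  (!![-1,0,0,0; 0,-1,0,0; 0,0,-1,0; 0,0,1,-1] : Matrix (Fin 4) (Fin 4) ℝ).mulVecLin

lemma phiStar_maps_exteriorPower :
    ∀ x ∈ ⋀[ℝ]^2 (Fin 4 → ℝ), (ExteriorAlgebra.map phiStar) x ∈ ⋀[ℝ]^2 (Fin 4 → ℝ) := by
  intro x hx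
  have hrange : Submodule.map (ExteriorAlgebra.map phiStar).toLinearMap
      (LinearMap.range (ι ℝ : (Fin 4 → ℝ) →ₗ[ℝ] ExteriorAlgebra ℝ (Fin 4 → ℝ)))
      ≤ LinearMap.range (ι ℝ) := by
    rintro y ⟨z, ⟨m, rfl⟩, rfl⟩
    exact ⟨phiStar m, (map_apply_ι _ m).symm⟩
  have : Submodule.map (ExteriorAlgebra.map phiStar).toLinearMap (⋀[ℝ]^2 (Fin 4 → ℝ))
      ≤ ⋀[ℝ]^2 (Fin 4 → ℝ) := by
    rw [show (⋀[ℝ]^2 (Fin 4 → ℝ))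
        = (LinearMap.range (ι ℝ : (Fin 4 → ℝ) →ₗ[ℝ] ExteriorAlgebra ℝ (Fin 4 → ℝ))) ^ 2
        from rfl, Submodule.map_pow]
    exact pow_le_pow_left' hrange 2
  exact this ⟨x, hx, rfl⟩

/-- The induced endomorphism `Λ²φ*` of the second exterior power `Λ²(ℝ⁴)`. -/
noncomputable def lambda2PhiStar : ⋀[ℝ]^2 (Fin 4 → ℝ) →ₗ[ℝ] ⋀[ℝ]^2 (Fin 4 → ℝ) :=
  LinearMap.restrict (ExteriorAlgebra.map phiStar).toLinearMap phiStar_maps_exteriorPower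

namespace exteriorPower

variable {K E : Type*} [Field K] [AddCommGroup E] [Module K E]

theorem ιMulti_ne_zero_of_linearIndependent {n : ℕ} {v : Fin n → E}
    (hv : LinearIndependent K v) : ιMulti K n v ≠ 0 := by
  simpa [ιMulti_family] using (ιMulti_family_linearIndependent_field (n := n) hv).ne_zero
    (Set.powersetCard.ofFinEmbEquiv (RelEmbedding.refl (· ≤ ·)))

end exteriorPower

namespace Module.End

variable {K V : Type*} [Field K] [AddCommGroup V] [Module K V] {f : End K V} {μ : K}

theorem hasEigenvector_of_mem_ker_sub_smul {v : V}
    (hv : v ∈ LinearMap.ker (f - μ • LinearMap.id)) (hv0 : v ≠ 0) : f.HasEigenvector μ v :=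
  ⟨mem_eigenspace_iff.mpr (by simpa [sub_eq_zero] using hv), hv0⟩

theorem hasEigenvalue_of_ker_inf_range_ne_bot
    (h : LinearMap.ker (f - μ • LinearMap.id) ⊓ LinearMap.range (f - μ • LinearMap.id) ≠ ⊥) :
    f.HasEigenvalue μ := by
  obtain ⟨v, hv, hv0⟩ := (Submodule.ne_bot_iff _).1 h
  exact hasEigenvalue_of_hasEigenvector (hasEigenvector_of_mem_ker_sub_smul hv.1 hv0)

theorem sq_X_sub_C_dvd_minpoly_of_ker_inf_range_ne_bot
    (h : LinearMap.ker (f - μ • LinearMap.id) ⊓ LinearMap.range (f - μ • LinearMap.id) ≠ ⊥) :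
    (X - C μ) ^ 2 ∣ minpoly K f := by
  obtain ⟨_, ⟨hker, u, rfl⟩, hv0⟩ := (Submodule.ne_bot_iff _).1 h
  have hvec := hasEigenvector_of_mem_ker_sub_smul hker hv0
  obtain ⟨q, hq⟩ :=
    dvd_iff_isRoot.mpr (isRoot_of_hasEigenvalue (hasEigenvalue_of_hasEigenvector hvec))
  have hqv : aeval f q ((f - μ • LinearMap.id : End K V) u) = 0 := by
    have := congr($(minpoly.aeval K f) u)
    rwa [hq, mul_comm, aeval_mul, aeval_sub, aeval_X, aeval_C, Algebra.algebraMap_eq_smul_one,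
      one_eq_id] at this
  rw [aeval_apply_of_hasEigenvector hvec, smul_eq_zero] at hqv
  rw [hq, pow_two]
  exact mul_dvd_mul_left _ (dvd_iff_isRoot.mpr (hqv.resolve_right hv0))

end Module.End

lemma phiStar_single_zero : phiStar (Pi.single 0 1) = -Pi.single 0 1 := by
  ext i; fin_cases i <;> simp [phiStar, Matrix.mulVec, dotProduct, Fin.sum_univ_four]

lemma phiStar_single_two : phiStar (Pi.single 2 1) = -Pi.single 2 1 + Pi.single 3 1 := by
  ext i; fin_cases i <;> simp [phiStar, Matrix.mulVec, dotProduct, Fin.sum_univ_four]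

lemma phiStar_single_three : phiStar (Pi.single 3 1) = -Pi.single 3 1 := by
  ext i; fin_cases i <;> simp [phiStar, Matrix.mulVec, dotProduct, Fin.sum_univ_four]

noncomputable def wedgeSingle (i j : Fin 4) : ⋀[ℝ]^2 (Fin 4 → ℝ) :=
  exteriorPower.ιMulti ℝ 2 ![Pi.single i 1, Pi.single j 1]

lemma coe_wedgeSingle (i j : Fin 4) :
    (wedgeSingle i j : ExteriorAlgebra ℝ (Fin 4 → ℝ)) =
      ι ℝ (Pi.single i 1) * ι ℝ (Pi.single j 1) := by
  simp [wedgeSingle, ExteriorAlgebra.ιMulti_apply]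

lemma coe_lambda2PhiStar_wedgeSingle (i j : Fin 4) :
    (lambda2PhiStar (wedgeSingle i j) : ExteriorAlgebra ℝ (Fin 4 → ℝ)) =
      ι ℝ (phiStar (Pi.single i 1)) * ι ℝ (phiStar (Pi.single j 1)) := by
  rw [← map_apply_ι, ← map_apply_ι, ← map_mul, ← coe_wedgeSingle]
  rfl

lemma lambda2PhiStar_wedgeSingle_zero_three :
    lambda2PhiStar (wedgeSingle 0 3) = wedgeSingle 0 3 := by
  apply Subtype.ext
  rw [coe_lambda2PhiStar_wedgeSingle, phiStar_single_zero, phiStar_single_three, coe_wedgeSingle]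
  simp

lemma lambda2PhiStar_wedgeSingle_zero_two :
    lambda2PhiStar (wedgeSingle 0 2) = wedgeSingle 0 2 - wedgeSingle 0 3 := by
  apply Subtype.ext
  rw [coe_lambda2PhiStar_wedgeSingle, phiStar_single_zero, phiStar_single_two,
    Submodule.coe_sub, coe_wedgeSingle, coe_wedgeSingle]
  simp only [map_neg, map_add]
  noncomm_ring

lemma linearIndependent_single_zero_three :
    LinearIndependent ℝ ![(Pi.single 0 1 : Fin 4 → ℝ), Pi.single 3 1] := by
  refine LinearIndependent.pair_iff.2 fun s t hst => ⟨?_, ?_⟩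
  · simpa using congrFun hst 0
  · simpa using congrFun hst 3

lemma lambda2PhiStar_ker_inf_range_ne_bot :
    LinearMap.ker (lambda2PhiStar - LinearMap.id) ⊓
      LinearMap.range (lambda2PhiStar - LinearMap.id) ≠ ⊥ := by
  refine (Submodule.ne_bot_iff _).2 ⟨wedgeSingle 0 3, ⟨?_, -wedgeSingle 0 2, ?_⟩,
    exteriorPower.ιMulti_ne_zero_of_linearIndependent linearIndependent_single_zero_three⟩
  · simp [lambda2PhiStar_wedgeSingle_zero_three]
  · simp [lambda2PhiStar_wedgeSingle_zero_two]

/-- `Λ²φ*` has eigenvalue 1, `ker(Λ²φ* − id) ∩ im(Λ²φ* − id) ≠ {0}`, and `(X−1)²`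
divides its minimal polynomial. -/
theorem stmt7 :
    Module.End.HasEigenvalue lambda2PhiStar 1 ∧
    LinearMap.ker (lambda2PhiStar - LinearMap.id) ⊓
      LinearMap.range (lambda2PhiStar - LinearMap.id) ≠ ⊥ ∧
    (X - 1) ^ 2 ∣ minpoly ℝ lambda2PhiStar := by
  have h := lambda2PhiStar_ker_inf_range_ne_bot
  rw [← one_smul ℝ LinearMap.id] at h
  refine ⟨Module.End.hasEigenvalue_of_ker_inf_range_ne_bot h, by rwa [one_smul] at h, ?_⟩
  simpa using Module.End.sq_X_sub_C_dvd_minpoly_of_ker_inf_range_ne_bot h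
end

section
/- The matrix φ* = [[-1,0,0,0],[0,-1,0,0],[0,0,-1,0],[0,0,1,-1]] is not the exponential of any real 4×4 matrix: there is no g ∈ M₄(ℝ) with exp(g) = φ*. -/
/-!
If `exp g = φ*` then `B = exp (g / 2)` is a real square root of `φ*`. A square root commutes with
`φ*`, so it restricts to the `-1`-eigenspace `V` of `φ*`, where it squares to `-1`. Taking
determinants, `(det B|_V)² = (-1) ^ dim V`, so `dim V` is even; but `dim V = 3`.
-/

open Module

local notation "φ⋆" => (!![-1,0,0,0; 0,-1,0,0; 0,0,-1,0; 0,0,1,-1] : Matrix (Fin 4) (Fin 4) ℝ)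

section OrderedField

variable {K V : Type*} [Field K] [LinearOrder K] [IsStrictOrderedRing K]
  [AddCommGroup V] [Module K V] [FiniteDimensional K V]

theorem Module.End.even_finrank_of_sq_eq_neg_one {J : Module.End K V} (hJ : J ^ 2 = -1) :
    Even (finrank K V) := by
  have hdet : LinearMap.det J ^ 2 = (-1) ^ finrank K V := by
    rw [← map_pow, hJ, ← neg_one_smul K 1, LinearMap.det_smul, Module.End.one_eq_id,
      LinearMap.det_id, mul_one]
  by_contra hodd
  rw [(Nat.not_even_iff_odd.mp hodd).neg_one_pow] at hdet
  nlinarith [sq_nonneg (LinearMap.det J)]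

theorem Module.End.even_finrank_eigenspace_neg_one_of_sq_eq {A B : Module.End K V}
    (hBA : B ^ 2 = A) : Even (finrank K (A.eigenspace (-1))) := by
  have hcomm : Commute A B := hBA ▸ (Commute.refl B).pow_left 2
  have hmaps : ∀ x ∈ A.eigenspace (-1), B x ∈ A.eigenspace (-1) :=
    Module.End.mapsTo_genEigenspace_of_comm hcomm (-1) 1
  apply Module.End.even_finrank_of_sq_eq_neg_one (J := B.restrict hmaps)
  ext ⟨x, hx⟩
  have hAx : A x = -x := by simpa using Module.End.mem_eigenspace_iff.mp hx
  rw [Module.End.pow_restrict, LinearMap.coe_restrict_apply, hBA, hAx]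
  rfl

end OrderedField

theorem Matrix.exp_eq_sq_exp_half {𝕂 m : Type*} [RCLike 𝕂] [Fintype m] [DecidableEq m]
    (A : Matrix m m 𝕂) : NormedSpace.exp A = NormedSpace.exp ((2 : 𝕂)⁻¹ • A) ^ 2 := by
  rw [← Matrix.exp_nsmul, two_nsmul, ← add_smul, ← two_mul, mul_inv_cancel₀ two_ne_zero,
    one_smul]

theorem finrank_eigenspace_phiStar_neg_one :
    finrank ℝ (Module.End.eigenspace (Matrix.toLin' φ⋆) (-1)) = 3 := by
  have hker : Module.End.eigenspace (Matrix.toLin' φ⋆) (-1) =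
      LinearMap.ker (LinearMap.proj (R := ℝ) (φ := fun _ : Fin 4 => ℝ) 2) := by
    ext v
    simp [funext_iff, Fin.forall_fin_succ, dotProduct, Fin.sum_univ_four]
  have hproj : LinearMap.proj (R := ℝ) (φ := fun _ : Fin 4 => ℝ) 2 ≠ 0 := fun h ↦ by
    simpa using LinearMap.congr_fun h (Pi.single 2 1)
  have hrank := Module.Dual.finrank_ker_add_one_of_ne_zero hproj
  rw [Module.finrank_fin_fun] at hrank
  rw [hker]
  omega

/-- The matrix `φ* = [[-1,0,0,0],[0,-1,0,0],[0,0,-1,0],[0,0,1,-1]]` is not the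
exponential of any real 4×4 matrix. -/
theorem stmt9 :
    ¬ ∃ g : Matrix (Fin 4) (Fin 4) ℝ,
      NormedSpace.exp g =
        (!![-1,0,0,0; 0,-1,0,0; 0,0,-1,0; 0,0,1,-1] : Matrix (Fin 4) (Fin 4) ℝ) := by
  rintro ⟨g, hg⟩
  have hsq : Matrix.toLin' (NormedSpace.exp ((2 : ℝ)⁻¹ • g)) ^ 2 = Matrix.toLin' φ⋆ := by
    rw [← hg, Matrix.exp_eq_sq_exp_half g, pow_two, pow_two, Matrix.toLin'_mul,
      Module.End.mul_eq_comp]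
  have heven := Module.End.even_finrank_eigenspace_neg_one_of_sq_eq hsq
  rw [finrank_eigenspace_phiStar_neg_one] at heven
  exact Nat.not_even_iff_odd.mpr (by decide) heven
end
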